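/- arXiv:2012.02429 — 9 statements merged into one kernel-verified Lean document; each statement's English description precedes it below -/
import Mathlib

section
/- (Barker–Foran) Let C ⊆ ℝ^d be a nonempty convex cone such that C ⊆ C*. Then there exists a self-dual cone K ⊆ ℝ^d, i.e. a set with K* = K, such that C ⊆ K ⊆ C*. -/
/-!
Call a set `K` self-orthogonal if `K ⊆ K*`, i.e. all inner products between its points are
nonnegative. Self-orthogonal sets are closed under unions of chains, so by Zorn's lemma `C` lies
in a maximal self-orthogonal set `K`. Every `x ∈ K*` can be adjoined to `K` because
`⟨x, x⟩ ≥ 0`, so maximality forces `K* ⊆ K`, whence `K* = K`; and `K* ⊆ C*` since `C ⊆ K`.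
-/

/-- The dual cone of a subset of `ℝ^d` with the standard inner product. -/
def dualCone {d : ℕ} (S : Set (Fin d → ℝ)) : Set (Fin d → ℝ) :=
  {y | ∀ x ∈ S, 0 ≤ ∑ i, y i * x i}

section

variable {d : ℕ}

theorem dualCone_anti {S T : Set (Fin d → ℝ)} (h : S ⊆ T) : dualCone T ⊆ dualCone S :=
  fun _ hy x hx => hy x (h hx)

theorem subset_dualCone_comm {S T : Set (Fin d → ℝ)} : S ⊆ dualCone T ↔ T ⊆ dualCone S := by
  have key : ∀ {S T : Set (Fin d → ℝ)}, S ⊆ dualCone T → T ⊆ dualCone S :=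
    fun h y hy x hx => by simpa only [mul_comm] using h hx y hy
  exact ⟨key, key⟩

theorem sUnion_subset_dualCone_sUnion {c : Set (Set (Fin d → ℝ))}
    (hc : IsChain (· ⊆ ·) c) (h : ∀ K ∈ c, K ⊆ dualCone K) : ⋃₀ c ⊆ dualCone (⋃₀ c) := by
  rintro x ⟨s, hs, hxs⟩ y ⟨t, ht, hyt⟩
  rcases hc.total hs ht with hst | hts
  · exact h t ht (hst hxs) y hyt
  · exact h s hs hxs y (hts hyt)

theorem insert_subset_dualCone_insert {K : Set (Fin d → ℝ)} {x : Fin d → ℝ}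
    (hK : K ⊆ dualCone K) (hx : x ∈ dualCone K) : insert x K ⊆ dualCone (insert x K) := by
  have hxx : 0 ≤ ∑ i, x i * x i := Finset.sum_nonneg fun i _ => mul_self_nonneg (x i)
  have hKx : K ⊆ dualCone {x} := subset_dualCone_comm.mp (Set.singleton_subset_iff.mpr hx)
  rintro y (rfl | hy) z (rfl | hz)
  · exact hxx
  · exact hx z hz
  · exact hKx hy _ rfl
  · exact hK hy z hz

theorem exists_maximal_subset_dualCone {C : Set (Fin d → ℝ)} (hC : C ⊆ dualCone C) :
    ∃ K, C ⊆ K ∧ Maximal (fun K => K ⊆ dualCone K) K :=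
  zorn_subset_nonempty {K | K ⊆ dualCone K}
    (fun c hc hchain _ => ⟨⋃₀ c, sUnion_subset_dualCone_sUnion hchain hc,
      fun _ => Set.subset_sUnion_of_mem⟩) C hC

theorem dualCone_eq_of_maximal {K : Set (Fin d → ℝ)}
    (hK : Maximal (fun K => K ⊆ dualCone K) K) : dualCone K = K :=
  Set.Subset.antisymm
    (fun _ hx => hK.mem_of_prop_insert (insert_subset_dualCone_insert hK.prop hx)) hK.prop

end

theorem stmt3_general {d : ℕ} (C : Set (Fin d → ℝ))
    (hsub : C ⊆ dualCone C) :
    ∃ K : Set (Fin d → ℝ), dualCone K = K ∧ C ⊆ K ∧ K ⊆ dualCone C := by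
  obtain ⟨K, hCK, hK⟩ := exists_maximal_subset_dualCone hsub
  have hKK : dualCone K = K := dualCone_eq_of_maximal hK
  exact ⟨K, hKK, hCK, hKK ▸ dualCone_anti hCK⟩

/-- **Barker–Foran.** If `C ⊆ ℝ^d` is a nonempty convex cone with `C ⊆ C*`,
then there is a self-dual cone `K` with `C ⊆ K = K* ⊆ C*`. -/
theorem stmt3 {d : ℕ} (C : Set (Fin d → ℝ)) (hne : C.Nonempty)
    (hconv : Convex ℝ C) (hcone : ∀ x ∈ C, ∀ t : ℝ, 0 < t → t • x ∈ C)
    (hsub : C ⊆ dualCone C) :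
    ∃ K : Set (Fin d → ℝ), dualCone K = K ∧ C ⊆ K ∧ K ⊆ dualCone C :=
  stmt3_general C hsub
end

section
/- Let K_1, …, K_d ∈ M_n(ℝ), let v_1, …, v_m ∈ ℝ^d be vectors in the nonnegativity cone NC(K) (i.e. ∑_{j=1}^d (v_s)_j K_j is entrywise nonnegative for each s), and let p_1, …, p_m ≥ 0 be reals with ∑_{s=1}^m p_s v_s v_sᵀ = I_d. Then the matrices L_s := √(p_s) · ∑_{j=1}^d (v_s)_j K_j are entrywise nonnegative and satisfy ∑_{s=1}^m L_s X L_s^* = ∑_{i=1}^d K_i X K_i^* for all X ∈ M_n(ℂ). -/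
open scoped Matrix

/-! Writing `M_s = ∑ q, v s q • K q`, each `M_s X M_sᴴ` expands bilinearly into
`∑ q r, v s q v s r • K_q X K_rᴴ`; weighting by `p s = √(p s)²` and summing over `s`, the
coefficient of `K_q X K_rᴴ` becomes the `(q, r)` entry of `∑ s, p s • v_s v_sᵀ = 1`. -/

namespace Matrix

theorem map_ofReal_smul_sum_smul {ι n : Type*} [Fintype ι] (a : ℝ) (v : ι → ℝ)
    (K : ι → Matrix n n ℝ) :
    (a • ∑ q, v q • K q).map Complex.ofReal = a • ∑ q, v q • (K q).map Complex.ofReal := by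
  ext i j
  simp [sum_apply, Finset.mul_sum]

variable {ι σ n S R : Type*} [Fintype ι] [Fintype n]
  [CommSemiring S] [Star S] [TrivialStar S] [Semiring R] [StarAddMonoid R] [Module S R]
  [StarModule S R] [IsScalarTower S R R] [SMulCommClass S R R]

theorem smul_mul_mul_conjTranspose_smul (a : S) (M X : Matrix n n R) :
    (a • M) * X * (a • M)ᴴ = (a * a) • (M * X * Mᴴ) := by
  rw [conjTranspose_smul, star_trivial, Matrix.smul_mul, Matrix.smul_mul, Matrix.mul_smul,
    smul_smul]

theorem sum_smul_mul_mul_conjTranspose_sum_smul (c : ι → S) (A : ι → Matrix n n R)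
    (X : Matrix n n R) :
    (∑ q, c q • A q) * X * (∑ q, c q • A q)ᴴ =
      ∑ q, ∑ r, (c q * c r) • (A q * X * (A r)ᴴ) := by
  simp only [conjTranspose_sum, conjTranspose_smul, star_trivial, Finset.sum_mul,
    Finset.mul_sum, Matrix.smul_mul, Matrix.mul_smul, smul_smul]
  rw [Finset.sum_comm]
  exact Finset.sum_congr rfl fun q _ => Finset.sum_congr rfl fun r _ => by rw [mul_comm]

theorem sum_smul_mul_mul_conjTranspose_eq_of_sum_smul_vecMulVec_eq_one [Fintype σ] [DecidableEq ι]
    (w : σ → S) (c : σ → ι → S) (A : ι → Matrix n n R) (X : Matrix n n R)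
    (hc : ∑ s, w s • vecMulVec (c s) (c s) = 1) :
    ∑ s, w s • ((∑ q, c s q • A q) * X * (∑ q, c s q • A q)ᴴ) = ∑ q, A q * X * (A q)ᴴ := by
  have hcoef (q r : ι) : ∑ s, w s * (c s q * c s r) = if q = r then 1 else 0 := by
    simpa [sum_apply, vecMulVec_apply, one_apply] using congr_fun₂ hc q r
  simp_rw [sum_smul_mul_mul_conjTranspose_sum_smul, Finset.smul_sum, smul_smul]
  rw [Finset.sum_comm]
  simp_rw [Finset.sum_comm (s := Finset.univ (α := σ)), ← Finset.sum_smul, hcoef, ite_smul,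
    one_smul, zero_smul, Finset.sum_ite_eq, Finset.mem_univ, if_true]

end Matrix

/-- If `v 1, …, v m ∈ NC(K)` and `p` is a nonnegative vector with
`∑ s, p s • (v s) (v s)ᵀ = I_d`, then the matrices `L s = √(p s) • ∑ j, (v s) j • K j` are
entrywise nonnegative and give a Kraus representation of `X ↦ ∑ i, K i X K i^*`. -/
theorem stmt5 {n d m : ℕ} (K : Fin d → Matrix (Fin n) (Fin n) ℝ)
    (v : Fin m → Fin d → ℝ) (p : Fin m → ℝ) (hp : ∀ s, 0 ≤ p s)
    (hv : ∀ s, ∀ i j, 0 ≤ (∑ q, v s q • K q) i j)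
    (hI : ∑ s, p s • Matrix.vecMulVec (v s) (v s) = (1 : Matrix (Fin d) (Fin d) ℝ)) :
    (∀ s i j, 0 ≤ (Real.sqrt (p s) • ∑ q, v s q • K q) i j) ∧
    (∀ X : Matrix (Fin n) (Fin n) ℂ,
      ∑ s, ((Real.sqrt (p s) • ∑ q, v s q • K q).map (Complex.ofReal)) * X *
          ((Real.sqrt (p s) • ∑ q, v s q • K q).map (Complex.ofReal))ᴴ =
        ∑ q, (K q).map (Complex.ofReal) * X * ((K q).map (Complex.ofReal))ᴴ) := by
  refine ⟨fun s i j => mul_nonneg (Real.sqrt_nonneg _) (hv s i j), fun X => ?_⟩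
  simp_rw [Matrix.map_ofReal_smul_sum_smul, Matrix.smul_mul_mul_conjTranspose_smul,
    Real.mul_self_sqrt (hp _)]
  exact Matrix.sum_smul_mul_mul_conjTranspose_eq_of_sum_smul_vecMulVec_eq_one p v _ X hI
end

section
/- Let K_1, …, K_r ∈ M_n(ℂ) and let Φ(X) = ∑_{q=1}^r K_q X K_q^*, with Choi matrix J ∈ M_{n²}(ℂ) given by J_{(i,k),(j,l)} = Φ(E_{ij})_{kl} = ∑_{q=1}^r (K_q)_{ki} · conj((K_q)_{lj}). Then J is a completely positive matrix if and only if there exist finitely many entrywise nonnegative real matrices L_1, …, L_m ∈ M_n(ℝ) with ∑_{s=1}^m L_s X L_sᵀ = ∑_{q=1}^r K_q X K_q^* for all X ∈ M_n(ℂ). -/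
/-!
A Kraus map is determined by its Choi matrix, and the Choi matrix of Kraus operators `L s` is the
Gram matrix of the vectors `b (i, k) = (s ↦ (L s) k i)`. So nonnegative Gram vectors of `J` and
nonnegative real Kraus operators of `Φ` are the same data, read off coordinatewise; one extra zero
coordinate takes care of `1 ≤ k`.
-/

open scoped Matrix

theorem Matrix.transpose_map_ofReal {m n : Type*} (L : Matrix m n ℝ) :
    (L.map Complex.ofReal)ᵀ = (L.map Complex.ofReal)ᴴ := by
  rw [← Matrix.conjTranspose_map _ fun x => (Complex.conj_ofReal x).symm,
    Matrix.conjTranspose_eq_transpose_of_trivial, Matrix.transpose_map]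

namespace Kraus

variable {R ι n : Type*} [CommSemiring R] [StarRing R] [Fintype ι]

def choi (M : ι → Matrix n n R) : Matrix (n × n) (n × n) R :=
  Matrix.of fun s t => ∑ q, M q s.2 s.1 * star (M q t.2 t.1)

theorem choi_map_ofReal (L : ι → Matrix n n ℝ) (s t : n × n) :
    choi (fun q => (L q).map Complex.ofReal) s t = ((∑ q, L q s.2 s.1 * L q t.2 t.1 : ℝ) : ℂ) := by
  simp [choi, Complex.conj_ofReal]

variable [Fintype n]

def map (M : ι → Matrix n n R) (X : Matrix n n R) : Matrix n n R :=
  ∑ q, M q * X * (M q)ᴴ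

theorem map_apply (M : ι → Matrix n n R) (X : Matrix n n R) (k l : n) :
    map M X k l = ∑ i, ∑ j, X i j * choi M (i, k) (j, l) := by
  simp only [map, choi, Matrix.of_apply, Matrix.sum_apply, Matrix.mul_apply,
    Matrix.conjTranspose_apply, Finset.sum_mul, Finset.mul_sum]
  conv_lhs => rw [Finset.sum_comm]; enter [2, j]; rw [Finset.sum_comm]
  rw [Finset.sum_comm]
  refine Finset.sum_congr rfl fun i _ => Finset.sum_congr rfl fun j _ =>
    Finset.sum_congr rfl fun q _ => ?_
  ring

theorem map_single_apply [DecidableEq n] (M : ι → Matrix n n R) (i j k l : n) :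
    map M (Matrix.single i j 1) k l = choi M (i, k) (j, l) := by
  simp [map_apply, Matrix.single_apply, ite_and]

theorem map_eq_map_iff_choi_eq_choi {κ : Type*} [Fintype κ] [DecidableEq n]
    (M : ι → Matrix n n R) (N : κ → Matrix n n R) :
    map M = map N ↔ choi M = choi N := by
  refine ⟨fun h => ?_, fun h => ?_⟩
  · ext ⟨i, k⟩ ⟨j, l⟩
    rw [← map_single_apply, ← map_single_apply, h]
  · ext X k l
    simp only [map_apply, h]

theorem map_ofReal_eq_iff {κ : Type*} [Fintype κ] [DecidableEq n]
    (L : ι → Matrix n n ℝ) (K : κ → Matrix n n ℂ) :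
    (∀ X, ∑ s, (L s).map Complex.ofReal * X * ((L s).map Complex.ofReal)ᵀ = map K X) ↔
      ∀ s t, choi K s t = ((∑ q, L q s.2 s.1 * L q t.2 t.1 : ℝ) : ℂ) := by
  simp only [Matrix.transpose_map_ofReal]
  change (∀ X, map (fun q => (L q).map Complex.ofReal) X = map K X) ↔ _
  rw [← funext_iff, map_eq_map_iff_choi_eq_choi, ← Matrix.ext_iff]
  simp only [choi_map_ofReal, eq_comm]

end Kraus

open Kraus

/-- The Choi matrix `J_{(i,k),(j,l)} = ∑ q, (K q)_{k i} * conj ((K q)_{l j})`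
of `Φ(X) = ∑ q, K q * X * (K q)ᴴ` is a completely positive matrix iff `Φ` admits a Kraus
representation by finitely many entrywise nonnegative real matrices. -/
theorem stmt6 {n r : ℕ} (K : Fin r → Matrix (Fin n) (Fin n) ℂ) :
    (∃ k : ℕ, 1 ≤ k ∧ ∃ b : Fin n × Fin n → Fin k → ℝ,
        (∀ s i, 0 ≤ b s i) ∧
        ∀ s t : Fin n × Fin n,
          (∑ q, K q s.2 s.1 * star (K q t.2 t.1)) = ((∑ i, b s i * b t i : ℝ) : ℂ)) ↔
    (∃ m : ℕ, ∃ L : Fin m → Matrix (Fin n) (Fin n) ℝ,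
        (∀ s i j, 0 ≤ L s i j) ∧
        ∀ X : Matrix (Fin n) (Fin n) ℂ,
          ∑ s, (L s).map Complex.ofReal * X * ((L s).map Complex.ofReal)ᵀ =
            ∑ q, K q * X * (K q)ᴴ) := by
  constructor
  · rintro ⟨k, -, b, hb, hJ⟩
    exact ⟨k, fun q => Matrix.of fun k i => b (i, k) q, fun _ _ _ => hb _ _,
      (map_ofReal_eq_iff _ K).2 hJ⟩
  · rintro ⟨m, L, hL, hK⟩
    refine ⟨m + 1, Nat.le_add_left 1 m, fun s => Fin.snoc (fun q => L q s.2 s.1) 0,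
      fun s => Fin.lastCases (by simp) fun q => by simpa using hL q s.2 s.1, fun s t => ?_⟩
    refine ((map_ofReal_eq_iff L K).1 hK s t).trans ?_
    simp [Fin.sum_univ_castSucc]
end

section
/- Say a linear map Φ on M_n(ℂ) factors positively through M_m(ℂ) if there exists a block matrix Z = (Z(i,j))_{i,j=1}^n with each block Z(i,j) ∈ M_m(ℂ) positive semidefinite, such that for all X ∈ M_n(ℂ) and all p, q: Φ(X)_{pq} = (1/m) · tr( ∑_{i,j=1}^n X_{ij} · Z(p,i) Z(q,j)^* ) (this is Φ(X) = (id ⊗ τ)(Z (X ⊗ I_m) Z^*) with τ the normalized trace on M_m(ℂ)). If Φ factors positively through M_{m₁}(ℂ) and Ψ factors positively through M_{m₂}(ℂ), then the composition Ψ ∘ Φ factors positively through M_{m₁·m₂}(ℂ). -/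
/-!
If `Z₁` and `Z₂` factor `Φ` and `Ψ`, take the blocks `Z(r, i) = ∑ p, Z₁(p, i) ⊗ Z₂(r, p)`. They are
positive semidefinite as sums of Kronecker products of such, and since
`tr ((A ⊗ B) (C ⊗ D)ᴴ) = tr (A Cᴴ) · tr (B Dᴴ)`, the normalized trace on `M_{m₁ m₂}` splits as the
product of those on `M_{m₁}` and `M_{m₂}`; the trace kernel of `Z` is then exactly the composite
of the kernels of `Z₁` and `Z₂`.
-/

open scoped Matrix ComplexOrder

/-- A linear map `Φ` on `M_n(ℂ)` factors positively through `M_m(ℂ)` if there is a block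
matrix `Z = (Z i j)` with each `m×m` block positive semidefinite such that
`Φ(X) = (id ⊗ τ)(Z (X ⊗ I_m) Z^*)`, where `τ` is the normalized trace on `M_m(ℂ)`;
entrywise, `Φ(X) p q = (1/m) * tr (∑ i j, X i j • Z p i * (Z q j)ᴴ)`. -/
def FactorsPositively (n m : ℕ)
    (Φ : Matrix (Fin n) (Fin n) ℂ →ₗ[ℂ] Matrix (Fin n) (Fin n) ℂ) : Prop :=
  ∃ Z : Fin n → Fin n → Matrix (Fin m) (Fin m) ℂ,
    (∀ i j, (Z i j).PosSemidef) ∧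
    ∀ X : Matrix (Fin n) (Fin n) ℂ, ∀ p q : Fin n,
      Φ X p q = (1 / (m : ℂ)) * (∑ i, ∑ j, X i j • (Z p i * (Z q j)ᴴ)).trace

open scoped Kronecker

theorem Fintype.sum_sum_sum_sum_comm {α β γ δ M : Type*} [Fintype α] [Fintype β] [Fintype γ]
    [Fintype δ] [AddCommMonoid M] (f : α → β → γ → δ → M) :
    ∑ a, ∑ b, ∑ c, ∑ d, f a b c d = ∑ c, ∑ d, ∑ a, ∑ b, f a b c d := by
  simpa only [Fintype.sum_prod_type] using
    Finset.sum_comm (s := Finset.univ (α := α × β)) (t := Finset.univ (α := γ × δ))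
      (f := fun x y => f x.1 x.2 y.1 y.2)

namespace Matrix

variable {ι l m m₁ m₂ R : Type*} [Fintype ι] [Fintype l] [Fintype m] [Fintype m₁] [Fintype m₂]

theorem trace_submatrix_equiv [AddCommMonoid R] (A : Matrix m m R) (e : l ≃ m) :
    (A.submatrix e e).trace = A.trace :=
  e.sum_comp A.diag

theorem trace_submatrix_mul_conjTranspose_submatrix [NonUnitalSemiring R] [StarRing R]
    (A B : Matrix m m R) (e : l ≃ m) :
    (A.submatrix e e * (B.submatrix e e)ᴴ).trace = (A * Bᴴ).trace := by
  rw [conjTranspose_submatrix, submatrix_mul_equiv, trace_submatrix_equiv]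

theorem trace_kronecker_mul_conjTranspose [CommSemiring R] [StarRing R]
    (A C : Matrix m₁ m₁ R) (B D : Matrix m₂ m₂ R) :
    ((A ⊗ₖ B) * (C ⊗ₖ D)ᴴ).trace = (A * Cᴴ).trace * (B * Dᴴ).trace := by
  rw [conjTranspose_kronecker, ← mul_kronecker_mul, trace_kronecker]

theorem trace_sum_sum_smul_mul_conjTranspose [CommSemiring R] [StarRing R] (X : Matrix ι ι R)
    (Z₁ Z₂ : ι → Matrix m m R) :
    (∑ i, ∑ j, X i j • (Z₁ i * (Z₂ j)ᴴ)).trace = ∑ i, ∑ j, X i j * (Z₁ i * (Z₂ j)ᴴ).trace := by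
  simp only [trace_sum, trace_smul, smul_eq_mul]

/-- The block product of `Z₂` and `Z₁`, with the product of blocks replaced by the Kronecker
product (in the opposite order). -/
def kroneckerComp [AddCommMonoid R] [Mul R] (Z₁ : ι → ι → Matrix m₁ m₁ R)
    (Z₂ : ι → ι → Matrix m₂ m₂ R) (r i : ι) : Matrix (m₁ × m₂) (m₁ × m₂) R :=
  ∑ p, Z₁ p i ⊗ₖ Z₂ r p

theorem posSemidef_kroneckerComp {𝕜 : Type*} [RCLike 𝕜] {Z₁ : ι → ι → Matrix m₁ m₁ 𝕜}
    {Z₂ : ι → ι → Matrix m₂ m₂ 𝕜} (h₁ : ∀ p i, (Z₁ p i).PosSemidef)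
    (h₂ : ∀ r p, (Z₂ r p).PosSemidef) (r i : ι) :
    (kroneckerComp Z₁ Z₂ r i).PosSemidef :=
  posSemidef_sum _ fun p _ => (h₁ p i).kronecker (h₂ r p)

theorem trace_kroneckerComp_mul_conjTranspose [CommSemiring R] [StarRing R]
    (Z₁ : ι → ι → Matrix m₁ m₁ R) (Z₂ : ι → ι → Matrix m₂ m₂ R) (r s i j : ι) :
    (kroneckerComp Z₁ Z₂ r i * (kroneckerComp Z₁ Z₂ s j)ᴴ).trace =
      ∑ p, ∑ q, (Z₁ p i * (Z₁ q j)ᴴ).trace * (Z₂ r p * (Z₂ s q)ᴴ).trace := by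
  simp only [kroneckerComp, conjTranspose_sum, Finset.sum_mul_sum, trace_sum,
    trace_kronecker_mul_conjTranspose]

end Matrix

open Matrix

/-- If `Φ` factors positively through `M_{m₁}(ℂ)` and `Ψ` factors positively
through `M_{m₂}(ℂ)`, then `Ψ ∘ Φ` factors positively through `M_{m₁ m₂}(ℂ)`. -/
theorem stmt7 {n m₁ m₂ : ℕ}
    (Φ Ψ : Matrix (Fin n) (Fin n) ℂ →ₗ[ℂ] Matrix (Fin n) (Fin n) ℂ)
    (hΦ : FactorsPositively n m₁ Φ) (hΨ : FactorsPositively n m₂ Ψ) :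
    FactorsPositively n (m₁ * m₂) (Ψ ∘ₗ Φ) := by
  obtain ⟨Z₁, hZ₁, hΦ⟩ := hΦ
  obtain ⟨Z₂, hZ₂, hΨ⟩ := hΨ
  let e : Fin (m₁ * m₂) ≃ Fin m₁ × Fin m₂ := finProdFinEquiv.symm
  refine ⟨fun r i => (kroneckerComp Z₁ Z₂ r i).submatrix e e,
    fun r i => (posSemidef_kroneckerComp hZ₁ hZ₂ r i).submatrix e, fun X r s => ?_⟩
  rw [LinearMap.comp_apply, hΨ, trace_sum_sum_smul_mul_conjTranspose]
  simp_rw [hΦ, trace_sum_sum_smul_mul_conjTranspose, trace_submatrix_mul_conjTranspose_submatrix,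
    trace_kroneckerComp_mul_conjTranspose]
  simp only [Finset.mul_sum, Finset.sum_mul]
  rw [Fintype.sum_sum_sum_sum_comm]
  congr! 4
  push_cast
  ring
end

section
/- Let C ∈ M_n(ℂ) be a correlation matrix (positive semidefinite with C_{ii} = 1 for all i), fix m ≥ 1, and let τ(A) = tr(A)/m denote the normalized trace on M_m(ℂ). Then the following are equivalent: (i) there exists a block matrix Z = (Z(i,j))_{i,j=1}^n with every block Z(i,j) ∈ M_m(ℂ) positive semidefinite such that for all X ∈ M_n(ℂ) and all i, j: C_{ij} X_{ij} = τ( ∑_{k,l=1}^n X_{kl} Z(i,k) Z(j,l)^* ); (ii) there exist positive semidefinite matrices Z_1, …, Z_n ∈ M_m(ℂ) with C_{ij} = τ(Z_i Z_j) for all i, j. -/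
open scoped Matrix ComplexOrder

/-! Testing the factorization identity against the matrix unit `X = E_ij` gives
`C i j = τ (Z i i * (Z j j)ᴴ)`, so the diagonal blocks `W i = Z i i` work since they are
Hermitian; conversely the block-diagonal `Z` with diagonal blocks `W i` satisfies the identity. -/

namespace Matrix

variable {ι R M : Type*} [Fintype ι] [DecidableEq ι]

theorem sum_sum_single_apply_smul [Semiring R] [AddCommMonoid M] [Module R M]
    (a b : ι) (c : R) (F : ι → ι → M) :
    ∑ k, ∑ l, single a b c k l • F k l = c • F a b := by
  simp [single, ite_and, ite_smul]

theorem sum_sum_smul_ite_mul_conjTranspose_ite {m : Type*} [Fintype m] [Semiring R]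
    [StarRing R] (W : ι → Matrix m m R) (X : Matrix ι ι R) (i j : ι) :
    ∑ k, ∑ l, X k l • ((if i = k then W i else 0) * (if j = l then W j else 0)ᴴ) =
      X i j • (W i * (W j)ᴴ) := by
  simp [apply_ite, ite_mul]

end Matrix

theorem stmt9_general {n m : ℕ} (C : Matrix (Fin n) (Fin n) ℂ) :
    (∃ Z : Fin n → Fin n → Matrix (Fin m) (Fin m) ℂ,
        (∀ i j, (Z i j).PosSemidef) ∧
        ∀ X : Matrix (Fin n) (Fin n) ℂ, ∀ i j : Fin n,
          C i j * X i j = (∑ k, ∑ l, X k l • (Z i k * (Z j l)ᴴ)).trace / (m : ℂ)) ↔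
    (∃ W : Fin n → Matrix (Fin m) (Fin m) ℂ,
        (∀ i, (W i).PosSemidef) ∧
        ∀ i j, C i j = (W i * W j).trace / (m : ℂ)) := by
  constructor
  · rintro ⟨Z, hZ, hfact⟩
    refine ⟨fun i => Z i i, fun i => hZ i i, fun i j => ?_⟩
    have h := hfact (Matrix.single i j 1) i j
    rwa [Matrix.single_apply_same, mul_one, Matrix.sum_sum_single_apply_smul, one_smul,
      (hZ j j).isHermitian.eq] at h
  · rintro ⟨W, hW, hC⟩
    refine ⟨fun i k => if i = k then W i else 0, fun i k => ?_, fun X i j => ?_⟩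
    · dsimp only
      split_ifs
      · exact hW i
      · exact Matrix.PosSemidef.zero
    · rw [Matrix.sum_sum_smul_ite_mul_conjTranspose_ite, Matrix.trace_smul,
        (hW j).isHermitian.eq, smul_eq_mul, hC i j, mul_div_assoc, mul_comm]

/-- For a correlation matrix `C` (PSD with unit diagonal) and `m ≥ 1`, the
Schur product map `S_C` admits a positive factorization through `M_m(ℂ)` with normalized
trace `τ = tr/m` (via a block matrix `Z` with PSD blocks) iff there are PSD matrices
`Z 1, …, Z n ∈ M_m(ℂ)` with `C i j = τ (Z i * Z j)`. -/
theorem stmt9 {n m : ℕ} (hm : 1 ≤ m) (C : Matrix (Fin n) (Fin n) ℂ)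
    (hC : C.PosSemidef) (hdiag : ∀ i, C i i = 1) :
    (∃ Z : Fin n → Fin n → Matrix (Fin m) (Fin m) ℂ,
        (∀ i j, (Z i j).PosSemidef) ∧
        ∀ X : Matrix (Fin n) (Fin n) ℂ, ∀ i j : Fin n,
          C i j * X i j = (∑ k, ∑ l, X k l • (Z i k * (Z j l)ᴴ)).trace / (m : ℂ)) ↔
    (∃ W : Fin n → Matrix (Fin m) (Fin m) ℂ,
        (∀ i, (W i).PosSemidef) ∧
        ∀ i j, C i j = (W i * W j).trace / (m : ℂ)) :=
  stmt9_general C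
end

section
/- Let K₁, K₂ ∈ M_n(ℝ) be linearly independent and suppose that ∑_{q=1}^2 (K_q)_{ij} (K_q)_{kl} ≥ 0 for all indices i, j, k, l (i.e. the Choi matrix of the map Φ(X) = K₁XK₁^* + K₂XK₂^* is entrywise nonnegative). Then there exist orthonormal vectors v, w ∈ ℝ² such that both v₁K₁ + v₂K₂ and w₁K₁ + w₂K₂ are entrywise nonnegative; consequently Φ admits a Kraus representation by finitely many entrywise nonnegative real matrices, i.e. there exist entrywise nonnegative L_1, …, L_m ∈ M_n(ℝ) with ∑_{s=1}^m L_s X L_sᵀ = K₁XK₁^* + K₂XK₂^* for all X ∈ M_n(ℂ). -/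
/-!
The Choi condition says exactly that the points `pᵢⱼ = ((K₁)ᵢⱼ, (K₂)ᵢⱼ) ∈ ℝ²` have pairwise
nonnegative inner products, so any two of them make an angle of at most `π/2`. Taking `u` along
the "most clockwise" nonzero point, every `pᵢⱼ` lies in the closed quarter-plane spanned by `u`
and its rotation `u⊥`; then `v = u`, `w = u⊥` work. Rotating the pair `(K₁, K₂)` by the
orthogonal matrix with rows `v, w` does not change `X ↦ K₁ X K₁ᵀ + K₂ X K₂ᵀ`, and the rotated
pair `(v₁K₁ + v₂K₂, w₁K₁ + w₂K₂)` is entrywise nonnegative: a Kraus family with `m = 2`.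
-/

open scoped Matrix

theorem Prod.sq_add_sq_pos {a : ℝ × ℝ} (ha : a ≠ 0) : 0 < a.1 ^ 2 + a.2 ^ 2 := by
  have : a.1 ≠ 0 ∨ a.2 ≠ 0 := by
    contrapose! ha
    exact Prod.ext ha.1 ha.2
  rcases this with h | h <;> positivity

theorem cross_nonneg_trans {x a b : ℝ × ℝ} (ha : a ≠ 0)
    (hxa : 0 ≤ x.1 * a.1 + x.2 * a.2) (hxa' : 0 ≤ x.1 * a.2 - x.2 * a.1)
    (hab : 0 ≤ a.1 * b.1 + a.2 * b.2) (hab' : 0 ≤ a.1 * b.2 - a.2 * b.1) :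
    0 ≤ x.1 * b.2 - x.2 * b.1 := by
  -- In `ℂ`: `(x̄ a)(ā b) = |a|² x̄ b`, and a product of two first-quadrant numbers has `im ≥ 0`.
  have key : (a.1 ^ 2 + a.2 ^ 2) * (x.1 * b.2 - x.2 * b.1) =
      (x.1 * a.2 - x.2 * a.1) * (a.1 * b.1 + a.2 * b.2) +
        (x.1 * a.1 + x.2 * a.2) * (a.1 * b.2 - a.2 * b.1) := by ring
  refine (mul_nonneg_iff_of_pos_left (Prod.sq_add_sq_pos ha)).1 ?_
  rw [key]
  positivity

theorem exists_mem_forall_cross_nonneg {S : Finset (ℝ × ℝ)} (hS : S.Nonempty)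
    (h0 : ∀ a ∈ S, a ≠ 0) (hdot : ∀ a ∈ S, ∀ b ∈ S, 0 ≤ a.1 * b.1 + a.2 * b.2) :
    ∃ a ∈ S, ∀ b ∈ S, 0 ≤ a.1 * b.2 - a.2 * b.1 := by
  induction hS using Finset.Nonempty.cons_induction with
  | singleton a => exact ⟨a, Finset.mem_singleton_self a, by simp [mul_comm]⟩
  | cons x T hxT hT ih =>
    simp only [Finset.mem_cons, forall_eq_or_imp] at h0 hdot ⊢
    obtain ⟨a, haT, ha⟩ := ih h0.2 fun a ha b hb => (hdot.2 a ha).2 b hb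
    by_cases hax : 0 ≤ a.1 * x.2 - a.2 * x.1
    · exact ⟨a, Or.inr haT, hax, ha⟩
    · have hxa : 0 ≤ x.1 * a.2 - x.2 * a.1 := by linarith
      refine ⟨x, Or.inl rfl, by simp [mul_comm], fun b hb => ?_⟩
      exact cross_nonneg_trans (h0.2 a haT) (hdot.1.2 a haT) hxa ((hdot.2 a haT).2 b hb) (ha b hb)

theorem exists_unit_forall_dot_nonneg_and_cross_nonneg {ι : Type*} [Fintype ι]
    (x : ι → ℝ × ℝ) (hx : ∀ i j, 0 ≤ (x i).1 * (x j).1 + (x i).2 * (x j).2) :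
    ∃ u : ℝ × ℝ, u.1 ^ 2 + u.2 ^ 2 = 1 ∧
      ∀ i, 0 ≤ u.1 * (x i).1 + u.2 * (x i).2 ∧ 0 ≤ u.1 * (x i).2 - u.2 * (x i).1 := by
  classical
  rcases ((Finset.univ.image x).filter (· ≠ 0)).eq_empty_or_nonempty with hS | hS
  · refine ⟨(1, 0), by norm_num, fun i => ?_⟩
    have hxi : x i = 0 := by
      simpa using Finset.filter_eq_empty_iff.1 hS (Finset.mem_image_of_mem x (Finset.mem_univ i))
    simp [hxi]
  obtain ⟨_, haS, hcross⟩ := exists_mem_forall_cross_nonneg hS (by simp) (by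
    simp only [Finset.mem_filter, Finset.mem_image]
    rintro _ ⟨⟨i, -, rfl⟩, -⟩ _ ⟨⟨j, -, rfl⟩, -⟩
    exact hx i j)
  obtain ⟨⟨p, -, rfl⟩, hp⟩ := by simpa only [Finset.mem_filter, Finset.mem_image] using haS
  have hpos := Prod.sq_add_sq_pos hp
  set r := √((x p).1 ^ 2 + (x p).2 ^ 2)
  have hr : 0 < r := Real.sqrt_pos.2 hpos
  refine ⟨((x p).1 / r, (x p).2 / r), ?_, fun i => ⟨?_, ?_⟩⟩
  · rw [div_pow, div_pow, ← add_div, Real.sq_sqrt hpos.le, div_self hpos.ne']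
  · exact (div_nonneg (hx p i) hr.le).trans_eq (by ring)
  · by_cases hi : x i = 0
    · simp [hi]
    exact (div_nonneg (hcross (x i) (by simp [hi])) hr.le).trans_eq (by ring)

theorem Matrix.rotate_mul_mul_transpose_add {m n R : Type*} [Fintype n] [CommRing R]
    (K₁ K₂ : Matrix m n R) (X : Matrix n n R) {c s : R} (hcs : c ^ 2 + s ^ 2 = 1) :
    (c • K₁ + s • K₂) * X * (c • K₁ + s • K₂)ᵀ + (-s • K₁ + c • K₂) * X * (-s • K₁ + c • K₂)ᵀ =
      K₁ * X * K₁ᵀ + K₂ * X * K₂ᵀ := by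
  simp only [Matrix.transpose_add, Matrix.transpose_smul, Matrix.add_mul, Matrix.mul_add,
    Matrix.smul_mul, Matrix.mul_smul]
  linear_combination (norm := module) hcs • (K₁ * X * K₁ᵀ + K₂ * X * K₂ᵀ : Matrix m m R)

theorem Matrix.conjTranspose_map_ofReal {m n : Type*} (K : Matrix m n ℝ) :
    (K.map Complex.ofReal)ᴴ = (K.map Complex.ofReal)ᵀ := by
  ext
  simp

theorem stmt11_general {n : ℕ} (K₁ K₂ : Matrix (Fin n) (Fin n) ℝ)
    (hchoi : ∀ i j k l, 0 ≤ K₁ i j * K₁ k l + K₂ i j * K₂ k l) :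
    (∃ v w : Fin 2 → ℝ,
      v 0 * v 0 + v 1 * v 1 = 1 ∧
      w 0 * w 0 + w 1 * w 1 = 1 ∧
      v 0 * w 0 + v 1 * w 1 = 0 ∧
      (∀ i j, 0 ≤ v 0 * K₁ i j + v 1 * K₂ i j) ∧
      (∀ i j, 0 ≤ w 0 * K₁ i j + w 1 * K₂ i j)) ∧
    (∃ m : ℕ, ∃ L : Fin m → Matrix (Fin n) (Fin n) ℝ,
      (∀ s i j, 0 ≤ L s i j) ∧
      ∀ X : Matrix (Fin n) (Fin n) ℂ,
        ∑ s, (L s).map Complex.ofReal * X * ((L s).map Complex.ofReal)ᵀ =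
          K₁.map Complex.ofReal * X * (K₁.map Complex.ofReal)ᴴ +
            K₂.map Complex.ofReal * X * (K₂.map Complex.ofReal)ᴴ) := by
  obtain ⟨⟨c, s⟩, hcs, hu⟩ := exists_unit_forall_dot_nonneg_and_cross_nonneg
    (fun p : Fin n × Fin n => (K₁ p.1 p.2, K₂ p.1 p.2)) fun p q => hchoi p.1 p.2 q.1 q.2
  have hA (i j) : 0 ≤ c * K₁ i j + s * K₂ i j := (hu (i, j)).1
  have hB (i j) : 0 ≤ -s * K₁ i j + c * K₂ i j := by linarith [(hu (i, j)).2]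
  refine ⟨⟨![c, s], ![-s, c], ?_, ?_, ?_, by simpa using hA, by simpa using hB⟩,
    2, ![c • K₁ + s • K₂, -s • K₁ + c • K₂], ?_, fun X => ?_⟩
  · simpa [← sq] using hcs
  · simp only [Matrix.cons_val_zero, Matrix.cons_val_one, Matrix.cons_val_fin_one]
    linear_combination hcs
  · simp only [Matrix.cons_val_zero, Matrix.cons_val_one, Matrix.cons_val_fin_one]
    ring
  · intro t i j
    fin_cases t
    · simpa using hA i j
    · simpa using hB i j
  · have hcs' : (c : ℂ) ^ 2 + (s : ℂ) ^ 2 = 1 := by exact_mod_cast hcs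
    have hmap (a b : ℝ) : (a • K₁ + b • K₂).map Complex.ofReal =
        (a : ℂ) • K₁.map Complex.ofReal + (b : ℂ) • K₂.map Complex.ofReal := by
      ext
      simp
    simp only [Fin.sum_univ_two, Matrix.cons_val_zero, Matrix.cons_val_one, hmap,
      Complex.ofReal_neg, Matrix.conjTranspose_map_ofReal]
    exact Matrix.rotate_mul_mul_transpose_add _ _ X hcs'

/-- If `K₁, K₂ ∈ M_n(ℝ)` are linearly independent and the Choi matrix of
`Φ(X) = K₁ X K₁^* + K₂ X K₂^*` is entrywise nonnegative, then the nonnegativity cone of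
`(K₁, K₂)` contains an orthonormal pair of vectors, and consequently `Φ` admits a Kraus
representation by finitely many entrywise nonnegative real matrices. -/
theorem stmt11 {n : ℕ} (K₁ K₂ : Matrix (Fin n) (Fin n) ℝ)
    (hind : LinearIndependent ℝ ![K₁, K₂])
    (hchoi : ∀ i j k l, 0 ≤ K₁ i j * K₁ k l + K₂ i j * K₂ k l) :
    (∃ v w : Fin 2 → ℝ,
      v 0 * v 0 + v 1 * v 1 = 1 ∧
      w 0 * w 0 + w 1 * w 1 = 1 ∧
      v 0 * w 0 + v 1 * w 1 = 0 ∧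
      (∀ i j, 0 ≤ v 0 * K₁ i j + v 1 * K₂ i j) ∧
      (∀ i j, 0 ≤ w 0 * K₁ i j + w 1 * K₂ i j)) ∧
    (∃ m : ℕ, ∃ L : Fin m → Matrix (Fin n) (Fin n) ℝ,
      (∀ s i j, 0 ≤ L s i j) ∧
      ∀ X : Matrix (Fin n) (Fin n) ℂ,
        ∑ s, (L s).map Complex.ofReal * X * ((L s).map Complex.ofReal)ᵀ =
          K₁.map Complex.ofReal * X * (K₁.map Complex.ofReal)ᴴ +
            K₂.map Complex.ofReal * X * (K₂.map Complex.ofReal)ᴴ) :=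
  stmt11_general K₁ K₂ hchoi
end

section
/- Let W be the 5×5 real matrix with rows (1, 2/√6, 0, 0, 1/3), (2/√6, 1, 1/2, 0, 0), (0, 1/2, 1, 1/2, 0), (0, 0, 1/2, 1, 2/√6), (1/3, 0, 0, 2/√6, 1). Then W is positive semidefinite and entrywise nonnegative (doubly nonnegative), but W is not completely positive semidefinite: there do not exist m ≥ 1 and positive semidefinite matrices A_0, …, A_4 ∈ M_m(ℂ) with tr(A_i A_j) = W_{ij} for all 0 ≤ i, j ≤ 4. -/
/-!
Since `tr (A i * A j)` is a real inner product on Hermitian matrices, every real vector in the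
kernel of `W` is a linear relation among the `A i`, and for positive semidefinite matrices
`tr (P * Q) = 0` forces `P * Q = 0`, so each zero entry of `W` is a vanishing product.
Multiplying the two kernel relations by `A 1`, `A 3` and `A 2` with these vanishing products
gives `A 1 ^ 2 = A 3 ^ 2`, hence `A 1 ^ 4 = A 1 * (A 1 * A 3) * A 3 = 0`; since `A 1 ^ 2` is
Hermitian this forces `A 1 ^ 2 = 0`, contradicting `tr (A 1 ^ 2) = W 1 1 = 1`.
-/

open scoped ComplexOrder

/-- The 5×5 doubly nonnegative matrix `W` from the paper; it is the Gram matrix of the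
vectors `v₀ = (1,1,1)/√3`, `v₁ = (0,1,1)/√2`, `v₂ = (−1,0,1)/√2`, `v₃ = (0,−1,1)/√2`,
`v₄ = (1,−1,1)/√3` in `ℝ³`. -/
noncomputable def Wmat : Matrix (Fin 5) (Fin 5) ℝ :=
  !![1, 2 / Real.sqrt 6, 0, 0, 1 / 3;
     2 / Real.sqrt 6, 1, 1 / 2, 0, 0;
     0, 1 / 2, 1, 1 / 2, 0;
     0, 0, 1 / 2, 1, 2 / Real.sqrt 6;
     1 / 3, 0, 0, 2 / Real.sqrt 6, 1]

open Matrix Real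

section Trace

variable {ι n 𝕜 : Type*} [Fintype ι] [Fintype n] [RCLike 𝕜]

open scoped MatrixOrder in
theorem Matrix.PosSemidef.mul_eq_zero_of_trace_mul_eq_zero {P Q : Matrix n n 𝕜}
    (hP : P.PosSemidef) (hQ : Q.PosSemidef) (h : (P * Q).trace = 0) : P * Q = 0 := by
  classical
  obtain ⟨B, rfl⟩ := CStarAlgebra.nonneg_iff_eq_star_mul_self.mp hP.nonneg
  obtain ⟨C, rfl⟩ := CStarAlgebra.nonneg_iff_eq_star_mul_self.mp hQ.nonneg
  rw [star_eq_conjTranspose, star_eq_conjTranspose] at h ⊢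
  -- `tr (Bᴴ * B * (Cᴴ * C)) = tr ((B * Cᴴ)ᴴ * (B * Cᴴ))` by cyclicity of the trace
  have hBC : B * Cᴴ = 0 := by
    rw [← trace_conjTranspose_mul_self_eq_zero_iff, ← h, conjTranspose_mul,
      conjTranspose_conjTranspose, Matrix.mul_assoc, trace_mul_comm]
    simp only [Matrix.mul_assoc]
  rw [Matrix.mul_assoc, ← Matrix.mul_assoc B, hBC, Matrix.zero_mul, Matrix.mul_zero]

theorem Matrix.IsHermitian.eq_zero_of_mul_self_eq_zero {A : Matrix n n 𝕜} (hA : A.IsHermitian)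
    (h : A * A = 0) : A = 0 := by
  rwa [← conjTranspose_mul_self_eq_zero, hA.eq]

theorem Matrix.sum_smul_eq_zero_of_trace_mul_eq_of_mulVec_eq_zero {A : ι → Matrix n n 𝕜}
    (hA : ∀ i, (A i).IsHermitian) {G : Matrix ι ι ℝ} (hG : ∀ i j, (A i * A j).trace = G i j)
    {x : ι → ℝ} (hx : G *ᵥ x = 0) : ∑ i, x i • A i = 0 := by
  rw [← trace_conjTranspose_mul_self_eq_zero_iff]
  have hself : (∑ i, x i • A i)ᴴ = ∑ i, x i • A i := by
    simp [conjTranspose_sum, conjTranspose_smul, (hA _).eq]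
  calc ((∑ i, x i • A i)ᴴ * ∑ i, x i • A i).trace
      = ((x ⬝ᵥ G *ᵥ x : ℝ) : 𝕜) := by
        simp only [hself, Finset.sum_mul, Finset.mul_sum, trace_sum, smul_mul_assoc,
          mul_smul_comm, trace_smul, hG, dotProduct, mulVec]
        push_cast
        simp only [RCLike.real_smul_eq_coe_mul, Finset.mul_sum]
        refine Finset.sum_congr rfl fun i _ => Finset.sum_congr rfl fun j _ => ?_
        rw [← hG j i, trace_mul_comm, hG]
        ring
    _ = 0 := by rw [hx, dotProduct_zero, RCLike.ofReal_zero]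

end Trace

/-- The two relations come from the kernel vectors of `Wmat` (with `s = √6`), the six vanishing
products from its zero entries. -/
theorem mul_self_one_eq_mul_self_three {K R : Type*} [Field K] [Ring R] [Algebra K R]
    (a : Fin 5 → R) {s : K} (hs : s ≠ 0)
    (h₁ : (3 : K) • a 0 - s • a 1 + s • a 3 - (3 : K) • a 4 = 0)
    (h₂ : (3 : K) • a 0 - (2 * s) • a 1 + (2 * s) • a 2 - (2 * s) • a 3 + (3 : K) • a 4 = 0)
    (h02 : a 0 * a 2 = 0) (h30 : a 3 * a 0 = 0) (h13 : a 1 * a 3 = 0) (h31 : a 3 * a 1 = 0)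
    (h14 : a 1 * a 4 = 0) (h42 : a 4 * a 2 = 0) : a 1 * a 1 = a 3 * a 3 := by
  have hsq₁ : a 1 * a 1 = (2 : K) • (a 1 * a 2) := by
    have l₁ := congrArg (a 1 * ·) h₁
    have l₂ := congrArg (a 1 * ·) h₂
    simp only [mul_add, mul_sub, mul_smul_comm, h13, h14, smul_zero, add_zero, sub_zero,
      mul_zero] at l₁ l₂
    apply smul_right_injective R hs
    linear_combination (norm := module) l₁ - l₂
  have hsq₃ : a 3 * a 3 = (2 : K) • (a 3 * a 2) := by
    have l₁ := congrArg (a 3 * ·) h₁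
    have l₂ := congrArg (a 3 * ·) h₂
    simp only [mul_add, mul_sub, mul_smul_comm, h30, h31, smul_zero, zero_add, sub_zero,
      mul_zero] at l₁ l₂
    apply smul_right_injective R hs
    linear_combination (norm := module) -l₁ - l₂
  have h₁₂ : a 1 * a 2 = a 3 * a 2 := by
    have l₁ := congrArg (· * a 2) h₁
    simp only [add_mul, sub_mul, smul_mul_assoc, h02, h42, smul_zero, zero_sub, sub_zero,
      zero_mul] at l₁
    apply smul_right_injective R hs
    linear_combination (norm := module) -l₁
  rw [hsq₁, hsq₃, h₁₂]

theorem Wmat_posSemidef : Wmat.PosSemidef := by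
  set V : Matrix (Fin 3) (Fin 5) ℝ :=
    !![(√3)⁻¹, 0, -(√2)⁻¹, 0, (√3)⁻¹;
       (√3)⁻¹, (√2)⁻¹, 0, -(√2)⁻¹, -(√3)⁻¹;
       (√3)⁻¹, (√2)⁻¹, (√2)⁻¹, (√2)⁻¹, (√3)⁻¹] with hV
  have h6 : √6 = √2 * √3 := by rw [← Real.sqrt_mul (by norm_num)]; norm_num
  have hW : Wmat = Vᴴ * V := by
    ext i j
    fin_cases i <;> fin_cases j <;>
      simp [hV, Wmat, mul_apply, Fin.sum_univ_three, h6] <;> field_simp <;> norm_num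
  exact hW ▸ posSemidef_conjTranspose_mul_self V

theorem Wmat_nonneg (i j : Fin 5) : 0 ≤ Wmat i j := by
  fin_cases i <;> fin_cases j <;> simp [Wmat] <;> positivity

theorem Wmat_mulVec_eq_zero₁ : Wmat *ᵥ ![3, -√6, 0, √6, -3] = 0 := by
  have h : √6 * √6 = 6 := Real.mul_self_sqrt (by norm_num)
  ext i
  fin_cases i <;> simp [Wmat, mulVec, dotProduct, Fin.sum_univ_five] <;> field_simp <;> linarith

theorem Wmat_mulVec_eq_zero₂ : Wmat *ᵥ ![3, -2 * √6, 2 * √6, -2 * √6, 3] = 0 := by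
  have h : √6 * √6 = 6 := Real.mul_self_sqrt (by norm_num)
  ext i
  fin_cases i <;> simp [Wmat, mulVec, dotProduct, Fin.sum_univ_five] <;> field_simp <;> linarith

/-- `W` is positive semidefinite and entrywise nonnegative (doubly
nonnegative), but not completely positive semidefinite: there are no `m ≥ 1` and positive
semidefinite `A 0, …, A 4 ∈ M_m(ℂ)` with `tr (A i * A j) = W i j` for all `i, j`. -/
theorem stmt12 :
    Wmat.PosSemidef ∧ (∀ i j, 0 ≤ Wmat i j) ∧
    ¬ ∃ m : ℕ, 1 ≤ m ∧ ∃ A : Fin 5 → Matrix (Fin m) (Fin m) ℂ,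
        (∀ i, (A i).PosSemidef) ∧ ∀ i j, (A i * A j).trace = (Wmat i j : ℂ) := by
  refine ⟨Wmat_posSemidef, Wmat_nonneg, ?_⟩
  rintro ⟨m, -, A, hA, htr⟩
  have hker {x : Fin 5 → ℝ} (hx : Wmat *ᵥ x = 0) : ∑ i, x i • A i = 0 :=
    sum_smul_eq_zero_of_trace_mul_eq_of_mulVec_eq_zero (fun i => (hA i).isHermitian) htr hx
  have hzero (i j : Fin 5) (h : Wmat i j = 0) : A i * A j = 0 :=
    (hA i).mul_eq_zero_of_trace_mul_eq_zero (hA j) (by rw [htr, h, Complex.ofReal_zero])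
  have h13 : A 1 * A 3 = 0 := hzero 1 3 (by simp [Wmat])
  have hrel₁ := hker Wmat_mulVec_eq_zero₁
  have hrel₂ := hker Wmat_mulVec_eq_zero₂
  simp only [Fin.sum_univ_five, cons_val_zero, cons_val_one, cons_val] at hrel₁ hrel₂
  have hsq : A 1 * A 1 = A 3 * A 3 :=
    mul_self_one_eq_mul_self_three A (s := √6) (by positivity)
      (by linear_combination (norm := module) hrel₁) (by linear_combination (norm := module) hrel₂)
      (hzero 0 2 (by simp [Wmat])) (hzero 3 0 (by simp [Wmat])) h13
      (hzero 3 1 (by simp [Wmat])) (hzero 1 4 (by simp [Wmat])) (hzero 4 2 (by simp [Wmat]))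
  have hA₁ : A 1 * A 1 = 0 := by
    refine (pow_two (A 1) ▸ (hA 1).isHermitian.pow 2).eq_zero_of_mul_self_eq_zero ?_
    calc A 1 * A 1 * (A 1 * A 1) = A 1 * (A 1 * A 3) * A 3 := by
          nth_rw 2 [hsq]; simp only [Matrix.mul_assoc]
      _ = 0 := by rw [h13, Matrix.mul_zero, Matrix.zero_mul]
  simpa [hA₁, Wmat] using htr 1 1
end

section
/- Let unit vectors u_1, …, u_n and v_1, …, v_n in ℂ^d form a bipartite unextendible product basis on ℂ^d ⊗ ℂ^d. Then for every subset S ⊆ {1, …, n} with |S| = n − d + 1, the vectors {u_i : i ∈ S} span ℂ^d (and by symmetry the same holds for {v_i : i ∈ S}). -/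
/-!
If `{u i : i ∈ S}` failed to span, some `x ≠ 0` would be orthogonal to all of them. The remaining
`n - |S| = d - 1` vectors `v i` cannot span `ℂ^d`, so some `y ≠ 0` is orthogonal to all of them,
and then `x ⊗ y` is orthogonal to every `u i ⊗ v i`, contradicting unextendibility.
-/

open Module Submodule

section

variable {𝕜 E F ι : Type*} [RCLike 𝕜]
  [NormedAddCommGroup E] [InnerProductSpace 𝕜 E] [NormedAddCommGroup F] [InnerProductSpace 𝕜 F]

theorem exists_ne_zero_forall_inner_eq_zero_of_span_ne_top [FiniteDimensional 𝕜 E]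
    {w : ι → E} {s : Set ι} (h : span 𝕜 (w '' s) ≠ ⊤) : ∃ x ≠ 0, ∀ i ∈ s, (inner 𝕜 (w i) x : 𝕜) = 0 := by
  have hne : (span 𝕜 (w '' s))ᗮ ≠ ⊥ := fun hb => h (orthogonal_eq_bot_iff.mp hb)
  obtain ⟨x, hx, hx0⟩ := exists_mem_ne_zero_of_ne_bot hne
  exact ⟨x, hx0, fun i hi => (mem_orthogonal _ x).mp hx _ (subset_span ⟨i, hi, rfl⟩)⟩

theorem span_image_ne_top_of_card_lt_finrank (w : ι → E) {T : Finset ι}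
    (hT : T.card < finrank 𝕜 E) : span 𝕜 (w '' T) ≠ ⊤ := by
  classical
  rw [← Finset.coe_image]
  refine (span_lt_top_of_card_lt_finrank ?_).ne
  simpa using Finset.card_image_le.trans_lt hT

variable (𝕜) in
/-- No nonzero product vector `x ⊗ y` is orthogonal to every `u i ⊗ v i`, since
`⟪u i ⊗ v i, x ⊗ y⟫ = ⟪u i, x⟫ * ⟪v i, y⟫`. -/
def IsUnextendible (u : ι → E) (v : ι → F) : Prop :=
  ∀ x y, x ≠ 0 → y ≠ 0 → ∃ i, (inner 𝕜 (u i) x : 𝕜) * (inner 𝕜 (v i) y : 𝕜) ≠ 0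

theorem IsUnextendible.symm {u : ι → E} {v : ι → F} (h : IsUnextendible 𝕜 u v) :
    IsUnextendible 𝕜 v u := fun y x hy hx => by
  obtain ⟨i, hi⟩ := h x y hx hy
  exact ⟨i, by rwa [mul_comm]⟩

theorem IsUnextendible.span_image_eq_top [FiniteDimensional 𝕜 E] [FiniteDimensional 𝕜 F]
    [Fintype ι] [DecidableEq ι] {u : ι → E} {v : ι → F}
    (h : IsUnextendible 𝕜 u v) {S : Finset ι} (hS : Sᶜ.card < finrank 𝕜 F) :
    span 𝕜 (u '' S) = ⊤ := by
  by_contra hspan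
  obtain ⟨x, hx0, hxS⟩ := exists_ne_zero_forall_inner_eq_zero_of_span_ne_top hspan
  obtain ⟨y, hy0, hyS⟩ :=
    exists_ne_zero_forall_inner_eq_zero_of_span_ne_top (span_image_ne_top_of_card_lt_finrank v hS)
  obtain ⟨i, hi⟩ := h x y hx0 hy0
  by_cases hiS : i ∈ S
  · exact hi (by rw [hxS i hiS, zero_mul])
  · exact hi (by rw [hyS i (Finset.mem_compl.mpr hiS), mul_zero])

end

theorem stmt13_general {d n : ℕ} (u v : Fin n → EuclideanSpace ℂ (Fin d))
    (hupb : ∀ x y : EuclideanSpace ℂ (Fin d), x ≠ 0 → y ≠ 0 →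
      ∃ i, (inner ℂ (u i) x : ℂ) * (inner ℂ (v i) y : ℂ) ≠ 0) :
    ∀ S : Finset (Fin n), S.card = n - d + 1 →
      Submodule.span ℂ (u '' (S : Set (Fin n))) = ⊤ ∧
        Submodule.span ℂ (v '' (S : Set (Fin n))) = ⊤ := by
  intro S hS
  have hupb : IsUnextendible ℂ u v := hupb
  have hcompl : Sᶜ.card < finrank ℂ (EuclideanSpace ℂ (Fin d)) := by
    have hSn : S.card ≤ n := by simpa using S.card_le_univ
    rw [Finset.card_compl, Fintype.card_fin, finrank_euclideanSpace_fin]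
    omega
  exact ⟨hupb.span_image_eq_top hcompl, hupb.symm.span_image_eq_top hcompl⟩

/-- If unit vectors `u i, v i ∈ ℂ^d` (`i = 1, …, n`) form a bipartite
unextendible product basis on `ℂ^d ⊗ ℂ^d`, then for every subset `S` of the indices with
`|S| = n - d + 1`, the vectors `{u i : i ∈ S}` span `ℂ^d`, and likewise for `{v i : i ∈ S}`. -/
theorem stmt13 {d n : ℕ} (u v : Fin n → EuclideanSpace ℂ (Fin d))
    (hu : ∀ i, ‖u i‖ = 1) (hv : ∀ i, ‖v i‖ = 1)
    (horth : ∀ i j, i ≠ j → (inner ℂ (u i) (u j) : ℂ) * (inner ℂ (v i) (v j) : ℂ) = 0)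
    (hupb : ∀ x y : EuclideanSpace ℂ (Fin d), x ≠ 0 → y ≠ 0 →
      ∃ i, (inner ℂ (u i) x : ℂ) * (inner ℂ (v i) y : ℂ) ≠ 0) :
    ∀ S : Finset (Fin n), S.card = n - d + 1 →
      Submodule.span ℂ (u '' (S : Set (Fin n))) = ⊤ ∧
        Submodule.span ℂ (v '' (S : Set (Fin n))) = ⊤ :=
  stmt13_general u v hupb
end

section
/- Let C ∈ M_5(ℂ) be positive semidefinite with C_{ii} = 1 for all i and rank(C) = 3, and suppose that for all i ≠ j (indices taken modulo 5): C_{ij} = 0 if j ≡ i ± 1 (mod 5), and C_{ij} ≠ 0 if j ≡ i ± 2 (mod 5); that is, the orthogonality graph of C is the 5-cycle, the orthogonality graph of a minimal unextendible product basis in ℂ³ ⊗ ℂ³. Then C is not completely positive semidefinite: there do not exist m ≥ 1 and positive semidefinite matrices A_1, …, A_5 ∈ M_m(ℂ) with tr(A_i A_j) = C_{ij} for all i, j. -/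
/-!
Realise `C` as the trace Gram matrix of positive semidefinite `A₀, …, A₄`. Since
`tr (A B) = 0` forces `A B = 0` for positive semidefinite `A, B`, the pentagon orthogonalities
become `A i * A (i ± 1) = 0`. As `C` has rank 3, for `r = q + 2` the matrices
`A (q + 1), A q, A r` span all the `A i`; expanding `A (q - 1)` in them and multiplying by `A q`
on the left gives `A q * A r = C q r • A q ^ 2`. With the adjoint of the same identity for
`(r, q)` this gives `A q ^ 2 = A r ^ 2`, so all the `A i ^ 2` coincide. Then
`A 1 ^ 4 = A 1 ^ 2 * A 2 ^ 2 = 0`, hence `A 1 ^ 2 = 0`, contradicting `tr (A 1 ^ 2) = C 1 1 = 1`.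
-/

open scoped ComplexOrder

namespace Matrix

variable {𝕜 n ι : Type*} [RCLike 𝕜] [Fintype n] [Fintype ι]

open scoped MatrixOrder in
theorem PosSemidef.mul_eq_zero_of_trace_mul_eq_zero_s17 {A B : Matrix n n 𝕜} (hA : A.PosSemidef)
    (hB : B.PosSemidef) (h : (A * B).trace = 0) : A * B = 0 := by
  classical
  obtain ⟨X, rfl⟩ := CStarAlgebra.nonneg_iff_eq_mul_star_self.mp hA.nonneg
  obtain ⟨Y, rfl⟩ := CStarAlgebra.nonneg_iff_eq_star_mul_self.mp hB.nonneg
  have hXY : star X * star Y = 0 := by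
    rw [← trace_mul_conjTranspose_self_eq_zero_iff, ← h, conjTranspose_mul, ← Matrix.mul_assoc,
      trace_mul_comm]
    simp only [star_eq_conjTranspose, conjTranspose_conjTranspose, Matrix.mul_assoc]
  rw [Matrix.mul_assoc, ← Matrix.mul_assoc (star X), hXY, Matrix.zero_mul, Matrix.mul_zero]

theorem IsHermitian.star_trace_mul {A B : Matrix n n 𝕜} (hA : A.IsHermitian)
    (hB : B.IsHermitian) : star (A * B).trace = (B * A).trace := by
  rw [← trace_conjTranspose, conjTranspose_mul, hA.eq, hB.eq]

/-- The equality case of Cauchy–Schwarz for the trace inner product. -/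
theorem IsHermitian.eq_trace_mul_smul_of_trace_mul_sq_eq_one {Q R : Matrix n n 𝕜}
    (hQ : Q.IsHermitian) (hR : R.IsHermitian) (hQQ : (Q * Q).trace = 1)
    (hRR : (R * R).trace = 1) (h : (Q * R).trace ^ 2 = 1) : Q = (Q * R).trace • R := by
  set t := (Q * R).trace
  have hRQ : (R * Q).trace = t := trace_mul_comm R Q
  have ht : star t = t := by rw [hQ.star_trace_mul hR, hRQ]
  rw [← sub_eq_zero, ← trace_conjTranspose_mul_self_eq_zero_iff]
  rw [conjTranspose_sub, conjTranspose_smul, hQ.eq, hR.eq, ht]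
  simp only [Matrix.sub_mul, Matrix.mul_sub, Matrix.smul_mul, Matrix.mul_smul, trace_sub,
    trace_smul, smul_eq_mul, hQQ, hRR, hRQ]
  linear_combination -h

theorem IsHermitian.mul_self_eq_mul_self_of_mul_eq_smul {X Y : Matrix n n 𝕜}
    (hX : X.IsHermitian) (hY : Y.IsHermitian) {t : 𝕜} (ht : t ≠ 0)
    (hXY : X * Y = t • (X * X)) (hYX : Y * X = star t • (Y * Y)) : X * X = Y * Y := by
  have hXY' : X * Y = t • (Y * Y) := by
    rw [← hX.eq, ← hY.eq, ← conjTranspose_mul, hYX, conjTranspose_smul, conjTranspose_mul,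
      hY.eq, star_star]
  exact smul_right_injective _ ht (hXY.symm.trans hXY')

theorem mul_eq_trace_mul_smul_mul_self {P Q R X : Matrix n n 𝕜} {a b c : 𝕜}
    (hX : X = a • P + b • Q + c • R) (hQP : Q * P = 0) (hQX : Q * X = 0)
    (hQQ : (Q * Q).trace = 1) (hRR : (R * R).trace = 1) (hPR : (P * R).trace = 0)
    (hXR : (X * R).trace ≠ 0) : Q * R = (Q * R).trace • (Q * Q) := by
  set t := (Q * R).trace
  have hbc : b • (Q * Q) + c • (Q * R) = 0 := by
    rw [← hQX, hX, Matrix.mul_add, Matrix.mul_add, Matrix.mul_smul, Matrix.mul_smul,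
      Matrix.mul_smul, hQP, smul_zero, zero_add]
  have hb : b = -(c * t) := by
    have := congrArg trace hbc
    simp only [trace_add, trace_smul, smul_eq_mul, hQQ, trace_zero] at this
    linear_combination this
  have hXR' : (X * R).trace = b * t + c := by
    simp only [hX, Matrix.add_mul, Matrix.smul_mul, trace_add, trace_smul, smul_eq_mul, hPR, hRR]
    ring
  have hc : c ≠ 0 := by
    rintro rfl
    simp [hb, hXR'] at hXR
  rw [hb, neg_smul, neg_add_eq_zero] at hbc
  exact smul_right_injective _ hc (hbc.symm.trans (smul_smul c t _).symm)

section TraceGram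

variable {A : ι → Matrix n n 𝕜} {C : Matrix ι ι 𝕜}

theorem trace_mul_linearCombination (hC : ∀ i j, (A i * A j).trace = C i j) (i : ι)
    (x : ι → 𝕜) : (A i * Fintype.linearCombination 𝕜 A x).trace = (C *ᵥ x) i := by
  simp [Fintype.linearCombination_apply, Matrix.mul_sum, trace_sum, hC, mulVec, dotProduct,
    mul_comm]

theorem linearIndependent_of_det_ne_zero [DecidableEq ι]
    (hC : ∀ i j, (A i * A j).trace = C i j) (hdet : C.det ≠ 0) : LinearIndependent 𝕜 A := by
  refine Fintype.linearIndependent_iff.mpr fun g hg ↦ congrFun (eq_zero_of_mulVec_eq_zero hdet ?_)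
  ext i
  rw [← trace_mul_linearCombination hC, Fintype.linearCombination_apply, hg, Matrix.mul_zero,
    trace_zero, Pi.zero_apply]

theorem ker_linearCombination_eq_ker_mulVecLin (hA : ∀ i, (A i).IsHermitian)
    (hC : ∀ i j, (A i * A j).trace = C i j) :
    LinearMap.ker (Fintype.linearCombination 𝕜 A) = LinearMap.ker C.mulVecLin := by
  ext x
  simp only [LinearMap.mem_ker, mulVecLin_apply]
  constructor
  · intro h
    ext i
    rw [← trace_mul_linearCombination hC, h, Matrix.mul_zero, trace_zero, Pi.zero_apply]
  · intro h
    have hstar : (Fintype.linearCombination 𝕜 A x)ᴴ = Fintype.linearCombination 𝕜 A (star x) := by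
      simp [Fintype.linearCombination_apply, conjTranspose_sum, (hA _).eq]
    have horth (j : ι) : (A j * Fintype.linearCombination 𝕜 A x).trace = 0 := by
      rw [trace_mul_linearCombination hC, h, Pi.zero_apply]
    rw [← trace_conjTranspose_mul_self_eq_zero_iff, hstar]
    generalize Fintype.linearCombination 𝕜 A x = y at horth
    simp [Fintype.linearCombination_apply, Matrix.sum_mul, trace_sum, horth]

theorem finrank_span_range_eq_rank (hA : ∀ i, (A i).IsHermitian)
    (hC : ∀ i j, (A i * A j).trace = C i j) :
    Module.finrank 𝕜 (Submodule.span 𝕜 (Set.range A)) = C.rank := by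
  rw [← Fintype.range_linearCombination]
  exact ((LinearMap.quotKerEquivRange _).symm.trans
    ((Submodule.quotEquivOfEq _ _ (ker_linearCombination_eq_ker_mulVecLin hA hC)).trans
      (LinearMap.quotKerEquivRange _))).finrank_eq

end TraceGram

theorem mul_eq_smul_mul_self_of_rank_eq_three {A : ι → Matrix n n 𝕜} {C : Matrix ι ι 𝕜}
    (hA : ∀ i, (A i).PosSemidef) (hC : ∀ i j, (A i * A j).trace = C i j) (hrank : C.rank = 3)
    (hdiag : ∀ i, C i i = 1) {p q r u w : ι} (hpq : C p q = 0) (hpr : C p r = 0)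
    (hqu : C q u = 0) (hur : C u r ≠ 0) (hwq : C w q ≠ 0) (hwr : C w r = 0) :
    A q * A r = C q r • (A q * A q) := by
  have hsymm (i j : ι) : C j i = C i j := by rw [← hC, ← hC, trace_mul_comm]
  have hHerm (i : ι) : (A i).IsHermitian := (hA i).isHermitian
  have hsq : C q r ^ 2 ≠ 1 := by
    intro h
    have hqr := (hHerm q).eq_trace_mul_smul_of_trace_mul_sq_eq_one (hHerm r)
      (by rw [hC, hdiag]) (by rw [hC, hdiag]) (by rwa [hC])
    apply hwq
    rw [← hC, hqr, Matrix.mul_smul, trace_smul, hC, hC, hwr, smul_zero]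
  have hind : LinearIndependent 𝕜 (A ∘ ![p, q, r]) :=
    linearIndependent_of_det_ne_zero (C := C.submatrix ![p, q, r] ![p, q, r])
      (fun i j ↦ hC _ _) (by
        rw [det_fin_three]
        simp only [submatrix_apply, Matrix.cons_val, hdiag, hsymm p, hpq, hpr, hsymm q r]
        exact fun h ↦ hsq (by linear_combination -h))
  have hspan : Submodule.span 𝕜 (Set.range (A ∘ ![p, q, r])) = Submodule.span 𝕜 (Set.range A) :=
    Submodule.eq_of_le_of_finrank_eq (Submodule.span_mono (Set.range_comp_subset_range _ _))
      (by rw [finrank_span_eq_card hind, finrank_span_range_eq_rank hHerm hC, hrank,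
        Fintype.card_fin])
  have hu : A u ∈ Submodule.span 𝕜 (Set.range (A ∘ ![p, q, r])) :=
    hspan ▸ Submodule.subset_span (Set.mem_range_self u)
  obtain ⟨c, hc⟩ := (Submodule.mem_span_range_iff_exists_fun 𝕜).mp hu
  simp only [Fin.sum_univ_three, Function.comp_apply, Matrix.cons_val] at hc
  have := mul_eq_trace_mul_smul_mul_self hc.symm
    ((hA q).mul_eq_zero_of_trace_mul_eq_zero_s17 (hA p) (by rw [hC, hsymm, hpq]))
    ((hA q).mul_eq_zero_of_trace_mul_eq_zero_s17 (hA u) (by rw [hC, hqu]))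
    (by rw [hC, hdiag]) (by rw [hC, hdiag]) (by rw [hC, hpr]) (by rwa [hC])
  rwa [hC] at this

theorem mul_self_eq_mul_self_add_two {A : Fin 5 → Matrix n n 𝕜} {C : Matrix (Fin 5) (Fin 5) 𝕜}
    (hA : ∀ i, (A i).PosSemidef) (hC : ∀ i j, (A i * A j).trace = C i j) (hrank : C.rank = 3)
    (hdiag : ∀ i, C i i = 1) (hadj : ∀ i j : Fin 5, (j = i + 1 ∨ j = i - 1) → C i j = 0)
    (hfar : ∀ i j : Fin 5, (j = i + 2 ∨ j = i - 2) → C i j ≠ 0) (i : Fin 5) :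
    A i * A i = A (i + 2) * A (i + 2) := by
  have hij := mul_eq_smul_mul_self_of_rank_eq_three hA hC hrank hdiag
    (p := i + 1) (q := i) (r := i + 2) (u := i - 1) (w := i + 3)
    (hadj _ _ (by grind)) (hadj _ _ (by grind)) (hadj _ _ (by grind))
    (hfar _ _ (by grind)) (hfar _ _ (by grind)) (hadj _ _ (by grind))
  have hji := mul_eq_smul_mul_self_of_rank_eq_three hA hC hrank hdiag
    (p := i + 1) (q := i + 2) (r := i) (u := i + 3) (w := i - 1)
    (hadj _ _ (by grind)) (hadj _ _ (by grind)) (hadj _ _ (by grind))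
    (hfar _ _ (by grind)) (hfar _ _ (by grind)) (hadj _ _ (by grind))
  refine (hA i).isHermitian.mul_self_eq_mul_self_of_mul_eq_smul (hA _).isHermitian
    (hfar _ _ (Or.inl rfl)) hij ?_
  rwa [← hC, (hA i).isHermitian.star_trace_mul (hA _).isHermitian, hC]

end Matrix

theorem stmt17_general (C : Matrix (Fin 5) (Fin 5) ℂ)
    (hdiag : ∀ i, C i i = 1) (hrank : C.rank = 3)
    (hgraph : ∀ i j : Fin 5, i ≠ j →
      ((j = i + 1 ∨ j = i - 1) → C i j = 0) ∧
      ((j = i + 2 ∨ j = i - 2) → C i j ≠ 0)) :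
    ¬ ∃ m : ℕ, 1 ≤ m ∧ ∃ A : Fin 5 → Matrix (Fin m) (Fin m) ℂ,
        (∀ i, (A i).PosSemidef) ∧ ∀ i j, (A i * A j).trace = C i j := by
  rintro ⟨m, -, A, hA, hC⟩
  have hsq := Matrix.mul_self_eq_mul_self_add_two hA hC hrank hdiag
    (fun i j h ↦ (hgraph i j (by grind)).1 h) (fun i j h ↦ (hgraph i j (by grind)).2 h)
  have h12 : A 1 * A 1 = A 2 * A 2 := (hsq 1).trans ((hsq 3).trans (hsq 0))
  have horth : A 1 * A 2 = 0 := (hA 1).mul_eq_zero_of_trace_mul_eq_zero_s17 (hA 2)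
    (by rw [hC]; exact (hgraph 1 2 (by decide)).1 (by decide))
  have hzero : A 1 * A 1 = 0 := by
    rw [← Matrix.conjTranspose_mul_self_eq_zero, Matrix.conjTranspose_mul, (hA 1).isHermitian.eq]
    nth_rewrite 2 [h12]
    rw [Matrix.mul_assoc, ← Matrix.mul_assoc (A 1) (A 2), horth, Matrix.zero_mul, Matrix.mul_zero]
  simpa [hC, hdiag] using congrArg Matrix.trace hzero

/-- No correlation matrix of rank `3` whose orthogonality graph is the
5-cycle (the orthogonality graph of a minimal unextendible product basis in `ℂ³ ⊗ ℂ³`)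
is completely positive semidefinite. -/
theorem stmt17 (C : Matrix (Fin 5) (Fin 5) ℂ) (hC : C.PosSemidef)
    (hdiag : ∀ i, C i i = 1) (hrank : C.rank = 3)
    (hgraph : ∀ i j : Fin 5, i ≠ j →
      ((j = i + 1 ∨ j = i - 1) → C i j = 0) ∧
      ((j = i + 2 ∨ j = i - 2) → C i j ≠ 0)) :
    ¬ ∃ m : ℕ, 1 ≤ m ∧ ∃ A : Fin 5 → Matrix (Fin m) (Fin m) ℂ,
        (∀ i, (A i).PosSemidef) ∧ ∀ i j, (A i * A j).trace = C i j :=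
  stmt17_general C hdiag hrank hgraph
end
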